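/- Let n ∈ ℕ, let γ_1, …, γ_n ∈ ℂ satisfy Q·γ_k ≠ 1 for all k, and let β ∈ ℂ with β = 0 in case Q = 0. Then there exist a nonzero finite-dimensional ℂ-vector space V, a simple Q-deformed sl₂-current representation on V, and a nonzero vector v ∈ V such that X⁺_t v = 0 for all t ∈ ℕ, J_0 v = (n + β)·v, and for all t > 0: J_t v = p_t(γ_1,…,γ_n)·v if Q = 0, and J_t v = (p_t(γ_1,…,γ_n) + Q^{−t}·β)·v if Q ≠ 0. -/

import Mathlib

/-!
Group the `γ k` by value: the distinct values `b` occur with multiplicities `m b`. The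
representation is the tensor product over `b` of the irreducible `(m b + 1)`-dimensional
sl₂-modules, with the currents evaluated at `b`:
`X⁺_t = ∑ b^t e_b`, `X⁻_t = ∑ (1 - Q b) b^t f_b`, `J_t = ∑ b^t h_b + Q^(-t) β`.
Operators on different factors commute, so the relations reduce to those of sl₂ in each factor;
the scalar `Q^(-t) β` drops out of `J_{s+t} - Q J_{s+t+1}`. The tensor product of the highest weight
vectors has `J_t`-eigenvalue `∑ m b b^t + Q^(-t) β = p_t(γ) + Q^(-t) β`.

Simplicity: as the `b` are distinct and `1 - Q b ≠ 0`, Lagrange interpolation recovers every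
`e_b` and `f_b` from the `X^±_t`, hence also `h_b = [e_b, f_b]`. The joint eigenvalues of the `h_b`
separate the standard basis, so a nonzero invariant subspace contains a basis vector, and the
`e_b` and `f_b` carry it to every other basis vector.
-/

open Finset Function Matrix

lemma Finset.sum_mul_sum_sub_sum_mul_sum_of_commute {ι S : Type*} [Ring S] (s : Finset ι)
    (x y : ι → S) (h : ∀ i ∈ s, ∀ j ∈ s, i ≠ j → Commute (x i) (y j)) :
    (∑ i ∈ s, x i) * (∑ j ∈ s, y j) - (∑ j ∈ s, y j) * (∑ i ∈ s, x i)
      = ∑ i ∈ s, (x i * y i - y i * x i) := by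
  rw [sum_mul_sum, sum_mul_sum, sum_comm (s := s) (t := s) (f := fun j i => y j * x i),
    ← sum_sub_distrib]
  refine sum_congr rfl fun i hi => ?_
  rw [← sum_sub_distrib, sum_eq_single_of_mem i hi fun j hj hji => by
    rw [(h i hi j hj hji.symm).eq, sub_self]]

lemma add_smul_one_mul_sub {R S : Type*} [CommRing R] [Ring S] [Algebra R S] (p x : S) (c : R) :
    (p + c • 1) * x - x * (p + c • 1) = p * x - x * p := by
  rw [add_mul, mul_add, smul_one_mul, mul_smul_one]
  abel

lemma mul_add_smul_one_sub {R S : Type*} [CommRing R] [Ring S] [Algebra R S] (p x : S) (c : R) :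
    x * (p + c • 1) - (p + c • 1) * x = x * p - p * x := by
  rw [add_mul, mul_add, smul_one_mul, mul_smul_one]
  abel

lemma Finset.sum_image_card_fiber_mul {κ R : Type*} [Fintype κ] [DecidableEq R] [CommSemiring R]
    (γ : κ → R) (f : R → R) : ∑ b : univ.image γ, (#{k | γ k = b} : R) * f b = ∑ k, f (γ k) := by
  rw [sum_coe_sort (univ.image γ) fun b => (#{k | γ k = b} : R) * f b, sum_comp f γ]
  simp [nsmul_eq_mul]

lemma zpow_neg_mul_eq_mul_zpow_neg_succ_mul {K : Type*} [Field K] {Q β : K} (hβ : Q = 0 → β = 0)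
    (t : ℕ) : Q ^ (-(t : ℤ)) * β = Q * (Q ^ (-((t + 1 : ℕ) : ℤ)) * β) := by
  rcases eq_or_ne Q 0 with hQ | hQ
  · simp [hβ hQ]
  · rw [← mul_assoc, ← zpow_one_add₀ hQ]
    push_cast
    congr 2
    ring

lemma Submodule.mem_of_forall_sum_pow_smul_mem {ι K M : Type*} [Fintype ι] [DecidableEq ι]
    [Field K] [AddCommGroup M] [Module K M] {a : ι → K} (ha : Injective a) {W : Submodule K M}
    {v : ι → M} (h : ∀ t : ℕ, ∑ i, a i ^ t • v i ∈ W) (i : ι) : v i ∈ W := by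
  set p := Lagrange.basis univ a i
  have hp : ∑ t ∈ range (p.natDegree + 1), p.coeff t • ∑ j, a j ^ t • v j = v i := by
    simp_rw [smul_sum, smul_smul]
    rw [sum_comm]
    simp_rw [← sum_smul, ← Polynomial.eval_eq_sum_range]
    rw [sum_eq_single i (fun j _ hji => by rw [Lagrange.eval_basis_of_ne hji.symm (mem_univ j),
      zero_smul]) (by simp), Lagrange.eval_basis_self ha.injOn (mem_univ i), one_smul]
  rw [← hp]
  exact W.sum_mem fun t _ => W.smul_mem _ (h t)

lemma Submodule.single_mem_of_forall_mul_mem {X ι K : Type*} [Fintype X] [DecidableEq X]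
    [Field K] (d : ι → X → K) (hd : ∀ x y, x ≠ y → ∃ i, d i x ≠ d i y) {W : Submodule K (X → K)}
    (hW : ∀ i, ∀ w ∈ W, d i * w ∈ W) {w : X → K} (hw : w ∈ W) (x : X) :
    Pi.single x (w x) ∈ W := by
  suffices ∀ s : Finset X, x ∉ s → ∀ w ∈ W, (∀ y ∉ insert x s, w y = 0) →
      Pi.single x (w x) ∈ W from
    this _ (notMem_erase x univ) w hw (by simp [insert_erase (mem_univ x)])
  intro s
  induction s using Finset.induction_on with
  | empty =>
    intro _ w hw hsupp
    convert hw using 1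
    funext y
    by_cases hy : y = x
    · subst hy
      simp
    · simp [hy, hsupp y]
  | insert y s _ ih =>
    intro hx w hw hsupp
    obtain ⟨i, hi⟩ := hd x y fun h => hx (h ▸ mem_insert_self x s)
    -- multiplying by `d i - d i y` kills the value at `y` and rescales the value at `x`
    have hmem := ih (fun h => hx (mem_insert_of_mem h)) (d i * w - d i y • w)
      (W.sub_mem (hW i w hw) (W.smul_mem _ hw)) fun z hz => by
        by_cases hzy : z = y
        · subst hzy
          simp
        · simp [hsupp z (by simp_all)]
    rwa [Pi.sub_apply, Pi.mul_apply, Pi.smul_apply, smul_eq_mul, ← sub_mul, ← smul_eq_mul,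
      Pi.single_smul', W.smul_mem_iff (sub_ne_zero.mpr hi)] at hmem

lemma Fin.mem_of_step_closed {n : ℕ} {T : Set (Fin (n + 1))}
    (hdown : ∀ k ∈ T, k ≠ 0 → k - 1 ∈ T) (hup : ∀ k ∈ T, k ≠ Fin.last n → k + 1 ∈ T)
    {k : Fin (n + 1)} (hk : k ∈ T) (l : Fin (n + 1)) : l ∈ T := by
  have h0 : (0 : Fin (n + 1)) ∈ T := by
    induction k using Fin.induction with
    | zero => exact hk
    | succ k ih =>
      have := hdown _ hk (Fin.succ_ne_zero k)
      rw [← Fin.coeSucc_eq_succ, add_sub_cancel_right] at this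
      exact ih this
  induction l using Fin.induction with
  | zero => exact h0
  | succ l ih =>
    rw [← Fin.coeSucc_eq_succ]
    exact hup _ ih (Fin.castSucc_ne_last l)

namespace Sl2Current

section Sl2

variable (R : Type*) [CommRing R]

/- The irreducible sl₂-module of dimension `k + 1`, in the basis `v₀, …, v_k` with `v₀` highest:
`h v_j = (k - 2j) v_j`, `e v_j = j v_{j-1}`, `f v_j = (k - j) v_{j+1}`. Indices are added in
`Fin (k + 1)`, which wraps around, but the coefficient vanishes at the wrapping entries. -/

def sl2E (k : ℕ) : Matrix (Fin (k + 1)) (Fin (k + 1)) R :=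
  of fun i j => if j = i + 1 then ((j : ℕ) : R) else 0

def sl2F (k : ℕ) : Matrix (Fin (k + 1)) (Fin (k + 1)) R :=
  of fun i j => if i = j + 1 then (k : R) - (j : ℕ) else 0

def sl2H (k : ℕ) : Matrix (Fin (k + 1)) (Fin (k + 1)) R :=
  diagonal fun i => (k : R) - 2 * (i : ℕ)

variable {R}

lemma sl2H_mul_sl2E_sub (k : ℕ) :
    sl2H R k * sl2E R k - sl2E R k * sl2H R k = (2 : R) • sl2E R k := by
  ext i j
  simp only [sl2H, sl2E, Matrix.sub_apply, diagonal_mul, mul_diagonal, Matrix.smul_apply, of_apply]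
  split_ifs with h
  · subst h
    rw [Fin.val_add_one]
    split_ifs
    · simp
    · push_cast
      ring
  · simp

lemma sl2H_mul_sl2F_sub (k : ℕ) :
    sl2H R k * sl2F R k - sl2F R k * sl2H R k = (-2 : R) • sl2F R k := by
  ext i j
  simp only [sl2H, sl2F, Matrix.sub_apply, diagonal_mul, mul_diagonal, Matrix.smul_apply, of_apply]
  split_ifs with h
  · subst h
    rw [Fin.val_add_one]
    split_ifs with hj
    · simp [hj]
    · push_cast
      ring
  · simp

lemma sl2E_mul_sl2F (k : ℕ) :
    sl2E R k * sl2F R k = diagonal fun i : Fin (k + 1) => (((i : ℕ) : R) + 1) * (k - (i : ℕ)) := by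
  have hval (i : Fin (k + 1)) :
      (((i + 1 : Fin (k + 1)) : ℕ) : R) * (k - (i : ℕ)) = ((i : ℕ) + 1) * (k - (i : ℕ)) := by
    rw [Fin.val_add_one]
    split_ifs with h
    · simp [h]
    · push_cast
      ring
  ext i l
  rcases eq_or_ne i l with rfl | hil
  · simp [sl2E, sl2F, mul_apply, hval]
  · simp [sl2E, sl2F, mul_apply, hil, hil.symm]

lemma sl2F_mul_sl2E (k : ℕ) :
    sl2F R k * sl2E R k = diagonal fun i : Fin (k + 1) => ((k : R) + 1 - (i : ℕ)) * (i : ℕ) := by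
  have h (a b : Fin (k + 1)) : a = b + 1 ↔ b = a - 1 := by rw [eq_sub_iff_add_eq, eq_comm]
  have hval (i : Fin (k + 1)) :
      ((k : R) - ((i - 1 : Fin (k + 1)) : ℕ)) * (i : ℕ) = (k + 1 - (i : ℕ)) * (i : ℕ) := by
    rcases eq_or_ne i 0 with rfl | hi
    · simp
    · have : 1 ≤ (i : ℕ) := Fin.val_pos_iff.mpr ((Fin.pos_iff_ne_zero' i).mpr hi)
      rw [Fin.val_sub_one_of_ne_zero hi]
      push_cast [this]
      ring
  ext i l
  rcases eq_or_ne i l with rfl | hil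
  · simp [sl2E, sl2F, mul_apply, h, hval]
  · simp [sl2E, sl2F, mul_apply, h, hil, hil.symm]

lemma sl2E_mul_sl2F_sub (k : ℕ) : sl2E R k * sl2F R k - sl2F R k * sl2E R k = sl2H R k := by
  rw [sl2E_mul_sl2F, sl2F_mul_sl2E, diagonal_sub, sl2H]
  congr 1
  ext i
  ring

end Sl2

variable {ι : Type*} [DecidableEq ι] {m : ι → ℕ} {R : Type*} [CommRing R]

/- `Box m → R` models `⨂ᵢ R^(m i + 1)`: `Pi.single J 1` is the tensor product of the basis
vectors with indices `J i`, and `site i A` is `A` acting on the `i`-th factor. -/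

abbrev Box (m : ι → ℕ) := ∀ i, Fin (m i + 1)

def site (i : ι) : Matrix (Fin (m i + 1)) (Fin (m i + 1)) R →ₐ[R] Module.End R (Box m → R) :=
  AlgHom.ofLinearMap
    { toFun A :=
        { toFun w J := (A *ᵥ fun k => w (update J i k)) (J i)
          map_add' v w := funext fun J => by simp [mulVec, dotProduct, mul_add, sum_add_distrib]
          map_smul' c w := funext fun J => by simp [mulVec, dotProduct, mul_sum, mul_left_comm] }
      map_add' A B := LinearMap.ext fun w => funext fun J => by simp [add_mulVec]
      map_smul' c A := LinearMap.ext fun w => funext fun J => by simp [smul_mulVec] }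
    (LinearMap.ext fun w => funext fun J => by simp)
    (fun A B => LinearMap.ext fun w => funext fun J => by simp [mulVec_mulVec])

lemma site_apply (i : ι) (A : Matrix (Fin (m i + 1)) (Fin (m i + 1)) R) (w : Box m → R)
    (J : Box m) : site i A w J = ∑ k, A (J i) k * w (update J i k) :=
  rfl

lemma commute_site_site {i j : ι} (hij : i ≠ j) (A : Matrix (Fin (m i + 1)) (Fin (m i + 1)) R)
    (B : Matrix (Fin (m j + 1)) (Fin (m j + 1)) R) : Commute (site i A) (site j B) := by
  refine LinearMap.ext fun w => funext fun J => ?_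
  simp only [Module.End.mul_apply, site_apply, update_of_ne hij, update_of_ne hij.symm,
    mul_sum, update_comm hij]
  rw [sum_comm]
  refine sum_congr rfl fun k _ => sum_congr rfl fun l _ => ?_
  ring

lemma site_diagonal (i : ι) (d : Fin (m i + 1) → R) (w : Box m → R) :
    site i (diagonal d) w = (fun J => d (J i)) * w := by
  funext J
  simp [site_apply, diagonal_apply]

variable [Fintype ι]

lemma site_single_of_col {i : ι} {A : Matrix (Fin (m i + 1)) (Fin (m i + 1)) R} {J : Box m}
    {j : Fin (m i + 1)} (hA : ∀ l, l ≠ j → A l (J i) = 0) :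
    site i A (Pi.single J 1) = A j (J i) • Pi.single (update J i j) 1 := by
  funext L
  rw [site_apply, sum_eq_single (J i) (fun k _ hk => by
    rw [Pi.single_apply, if_neg fun h => hk (by rw [← h, update_self])]; ring) (by simp)]
  simp only [Pi.single_apply, Pi.smul_apply, smul_eq_mul, mul_ite, mul_one, mul_zero,
    update_eq_iff, eq_update_iff, true_and]
  by_cases hL : L i = j
  · simp [hL]
  · simp [hL, hA _ hL]

lemma site_sl2E_single (i : ι) (J : Box m) :
    site i (sl2E R (m i)) (Pi.single J 1)
      = ((J i : ℕ) : R) • Pi.single (update J i (J i - 1)) 1 := by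
  rw [site_single_of_col (j := J i - 1) fun l hl =>
    if_neg fun h => hl (by rw [h, add_sub_cancel_right])]
  simp [sl2E]

lemma site_sl2F_single (i : ι) (J : Box m) :
    site i (sl2F R (m i)) (Pi.single J 1)
      = ((m i : R) - (J i : ℕ)) • Pi.single (update J i (J i + 1)) 1 := by
  rw [site_single_of_col (j := J i + 1) fun l hl => if_neg hl]
  simp [sl2F]

lemma site_diagonal_single (i : ι) (d : Fin (m i + 1) → R) (J : Box m) :
    site i (diagonal d) (Pi.single J 1) = d (J i) • Pi.single J 1 := by
  rw [site_single_of_col (j := J i) fun l hl => diagonal_apply_ne _ hl, diagonal_apply_eq,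
    update_eq_self]

lemma Box.mem_of_step_closed {S : Set (Box m)}
    (hdown : ∀ J ∈ S, ∀ i, J i ≠ 0 → update J i (J i - 1) ∈ S)
    (hup : ∀ J ∈ S, ∀ i, J i ≠ Fin.last (m i) → update J i (J i + 1) ∈ S)
    {J : Box m} (hJ : J ∈ S) (L : Box m) : L ∈ S := by
  have hcoord (K : Box m) (hK : K ∈ S) (i : ι) (k : Fin (m i + 1)) : update K i k ∈ S := by
    refine Fin.mem_of_step_closed (T := {k | update K i k ∈ S}) (fun k hk hk0 => ?_)
      (fun k hk hkl => ?_) (k := K i) (by simpa using hK) k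
    · simpa using hdown _ hk i (by simpa using hk0)
    · simpa using hup _ hk i (by simpa using hkl)
  have hpiece (s : Finset ι) : s.piecewise L J ∈ S := by
    induction s using Finset.induction_on with
    | empty => simpa using hJ
    | insert i s _ ih =>
      rw [piecewise_insert]
      exact hcoord _ ih i _
  simpa using hpiece univ

def current (A : ∀ i, Matrix (Fin (m i + 1)) (Fin (m i + 1)) R) :
    (ι → R) →ₗ[R] Module.End R (Box m → R) :=
  Fintype.linearCombination R fun i => site i (A i)

lemma current_apply (A : ∀ i, Matrix (Fin (m i + 1)) (Fin (m i + 1)) R) (c : ι → R) :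
    current A c = ∑ i, c i • site i (A i) :=
  Fintype.linearCombination_apply ..

lemma current_apply_apply (A : ∀ i, Matrix (Fin (m i + 1)) (Fin (m i + 1)) R) (c : ι → R)
    (w : Box m → R) : current A c w = ∑ i, c i • site i (A i) w := by
  simp [current_apply]

lemma current_mul_current_sub (A B : ∀ i, Matrix (Fin (m i + 1)) (Fin (m i + 1)) R)
    (c d : ι → R) :
    current A c * current B d - current B d * current A c
      = current (fun i => A i * B i - B i * A i) fun i => c i * d i := by
  rw [current_apply, current_apply, current_apply, sum_mul_sum_sub_sum_mul_sum_of_commute _ _ _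
    fun i _ j _ hij => ((commute_site_site hij _ _).smul_left _).smul_right _]
  refine sum_congr rfl fun i _ => ?_
  rw [map_sub, map_mul, map_mul, smul_sub, smul_mul_smul_comm, smul_mul_smul_comm,
    mul_comm (d i)]

lemma current_smul (A : ∀ i, Matrix (Fin (m i + 1)) (Fin (m i + 1)) R) (r : R) (c : ι → R) :
    current (fun i => r • A i) c = r • current A c := by
  simp only [current_apply, map_smul, smul_sum, smul_comm r]

section Relations

variable (m)

def xPlus (a : ι → R) (t : ℕ) : Module.End R (Box m → R) :=
  current (fun i => sl2E R (m i)) fun i => a i ^ t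

def xMinus (Q : R) (a : ι → R) (t : ℕ) : Module.End R (Box m → R) :=
  current (fun i => sl2F R (m i)) fun i => (1 - Q * a i) * a i ^ t

/- `z t` plays the role of `Q^(-t) β`. -/
def jCurrent (a : ι → R) (z : ℕ → R) (t : ℕ) : Module.End R (Box m → R) :=
  current (fun i => sl2H R (m i)) (fun i => a i ^ t) + z t • 1

variable {m} (Q : R) (a : ι → R) (z : ℕ → R)

lemma jCurrent_commute (s t : ℕ) :
    jCurrent m a z s * jCurrent m a z t = jCurrent m a z t * jCurrent m a z s := by
  rw [← sub_eq_zero, jCurrent, jCurrent, add_smul_one_mul_sub, mul_add_smul_one_sub,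
    current_mul_current_sub]
  simp [current_apply]

lemma jCurrent_mul_xPlus_sub (s t : ℕ) :
    jCurrent m a z s * xPlus m a t - xPlus m a t * jCurrent m a z s
      = (2 : R) • xPlus m a (s + t) := by
  rw [jCurrent, add_smul_one_mul_sub, xPlus, xPlus, current_mul_current_sub]
  simp only [sl2H_mul_sl2E_sub, current_smul, ← pow_add]

lemma jCurrent_mul_xMinus_sub (s t : ℕ) :
    jCurrent m a z s * xMinus m Q a t - xMinus m Q a t * jCurrent m a z s
      = -((2 : R) • xMinus m Q a (s + t)) := by
  rw [jCurrent, add_smul_one_mul_sub, xMinus, xMinus, current_mul_current_sub]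
  have hc : (fun i => a i ^ s * ((1 - Q * a i) * a i ^ t))
      = fun i => (1 - Q * a i) * a i ^ (s + t) :=
    funext fun i => by ring
  simp only [sl2H_mul_sl2F_sub, current_smul, hc]
  module

lemma xPlus_mul_xMinus_sub (hz : ∀ t, z t = Q * z (t + 1)) (s t : ℕ) :
    xPlus m a t * xMinus m Q a s - xMinus m Q a s * xPlus m a t
      = jCurrent m a z (s + t) - Q • jCurrent m a z (s + t + 1) := by
  rw [xPlus, xMinus, current_mul_current_sub, jCurrent, jCurrent, smul_add, add_sub_add_comm,
    smul_smul, ← hz, sub_self, add_zero, ← map_smul, ← map_sub]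
  simp only [sl2E_mul_sl2F_sub]
  congr 1
  funext i
  simp only [Pi.sub_apply, Pi.smul_apply, smul_eq_mul]
  ring

lemma xPlus_commute (s t : ℕ) : xPlus m a t * xPlus m a s = xPlus m a s * xPlus m a t := by
  rw [← sub_eq_zero, xPlus, xPlus, current_mul_current_sub]
  simp [current_apply]

lemma xMinus_commute (s t : ℕ) :
    xMinus m Q a t * xMinus m Q a s = xMinus m Q a s * xMinus m Q a t := by
  rw [← sub_eq_zero, xMinus, xMinus, current_mul_current_sub]
  simp [current_apply]

lemma xPlus_single_zero (t : ℕ) : xPlus m a t (Pi.single 0 1) = 0 := by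
  simp [xPlus, current_apply, site_sl2E_single]

lemma jCurrent_single_zero (t : ℕ) :
    jCurrent m a z t (Pi.single 0 1) = (∑ i, (m i : R) * a i ^ t + z t) • Pi.single 0 1 := by
  simp [jCurrent, current_apply, sl2H, site_diagonal_single, add_smul, sum_smul, smul_smul,
    mul_comm]

end Relations

section Simple

variable {𝕜 : Type*} [Field 𝕜] [CharZero 𝕜]

lemma exists_single_mem_of_sl2H_invariant {W : Submodule 𝕜 (Box m → 𝕜)} (hW : W ≠ ⊥)
    (hH : ∀ i, ∀ w ∈ W, site i (sl2H 𝕜 (m i)) w ∈ W) : ∃ J, Pi.single J 1 ∈ W := by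
  obtain ⟨w, hw, hw0⟩ := W.exists_mem_ne_zero_of_ne_bot hW
  obtain ⟨J, hJ⟩ := Function.ne_iff.mp hw0
  have hsep (L L' : Box m) (hL : L ≠ L') :
      ∃ i, (m i : 𝕜) - 2 * (L i : ℕ) ≠ (m i : 𝕜) - 2 * (L' i : ℕ) := by
    obtain ⟨i, hi⟩ := Function.ne_iff.mp hL
    exact ⟨i, by simpa [Fin.val_inj] using hi⟩
  have := W.single_mem_of_forall_mul_mem _ hsep (fun i w hw => by
    simpa only [sl2H, site_diagonal] using hH i w hw) hw J
  rw [← mul_one (w J), ← smul_eq_mul, Pi.single_smul', W.smul_mem_iff hJ] at this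
  exact ⟨J, this⟩

lemma single_mem_of_site_invariant {W : Submodule 𝕜 (Box m → 𝕜)}
    (hE : ∀ i, ∀ w ∈ W, site i (sl2E 𝕜 (m i)) w ∈ W)
    (hF : ∀ i, ∀ w ∈ W, site i (sl2F 𝕜 (m i)) w ∈ W) {J : Box m} (hJ : Pi.single J 1 ∈ W)
    (L : Box m) : Pi.single L 1 ∈ W := by
  refine Box.mem_of_step_closed (S := {L | Pi.single L 1 ∈ W}) (fun K hK i hKi => ?_)
    (fun K hK i hKi => ?_) hJ L
  · have := hE i _ hK
    rwa [site_sl2E_single, W.smul_mem_iff (by simpa using hKi)] at this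
  · have hc : (m i : 𝕜) - (K i : ℕ) ≠ 0 :=
      sub_ne_zero.mpr (by exact_mod_cast (Fin.val_lt_last hKi).ne')
    have := hF i _ hK
    rwa [site_sl2F_single, W.smul_mem_iff hc] at this

theorem eq_bot_or_eq_top_of_site_invariant (W : Submodule 𝕜 (Box m → 𝕜))
    (hE : ∀ i, ∀ w ∈ W, site i (sl2E 𝕜 (m i)) w ∈ W)
    (hF : ∀ i, ∀ w ∈ W, site i (sl2F 𝕜 (m i)) w ∈ W) : W = ⊥ ∨ W = ⊤ := by
  refine or_iff_not_imp_left.2 fun hW => ?_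
  have hH (i : ι) (w : Box m → 𝕜) (hw : w ∈ W) : site i (sl2H 𝕜 (m i)) w ∈ W := by
    rw [← sl2E_mul_sl2F_sub, map_sub, map_mul, map_mul]
    exact W.sub_mem (hE i _ (hF i w hw)) (hF i _ (hE i w hw))
  obtain ⟨J, hJ⟩ := exists_single_mem_of_sl2H_invariant hW hH
  refine eq_top_iff.2 ((Pi.basisFun 𝕜 (Box m)).span_eq ▸ Submodule.span_le.2 ?_)
  rintro _ ⟨L, rfl⟩
  simpa using single_mem_of_site_invariant hE hF hJ L

theorem eq_bot_or_eq_top_of_current_invariant {Q : 𝕜} {a : ι → 𝕜} (ha : Injective a)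
    (hQa : ∀ i, Q * a i ≠ 1) (W : Submodule 𝕜 (Box m → 𝕜))
    (hp : ∀ t, ∀ w ∈ W, xPlus m a t w ∈ W) (hm : ∀ t, ∀ w ∈ W, xMinus m Q a t w ∈ W) :
    W = ⊥ ∨ W = ⊤ := by
  refine eq_bot_or_eq_top_of_site_invariant W (fun i w hw => ?_) (fun i w hw => ?_)
  · refine W.mem_of_forall_sum_pow_smul_mem ha (v := fun j => site j (sl2E 𝕜 (m j)) w)
      (fun t => ?_) i
    simpa [xPlus, current_apply_apply] using hp t w hw
  · have := W.mem_of_forall_sum_pow_smul_mem ha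
      (v := fun j => (1 - Q * a j) • site j (sl2F 𝕜 (m j)) w)
      (fun t => by simpa [xMinus, current_apply_apply, smul_smul, mul_comm] using hm t w hw) i
    rwa [W.smul_mem_iff (sub_ne_zero.mpr (hQa i).symm)] at this

end Simple

end Sl2Current

open Sl2Current

theorem stmt11 (Q : ℂ) (n : ℕ) (γ : Fin n → ℂ) (hγ : ∀ k, Q * γ k ≠ 1) (β : ℂ)
    (hβ : Q = 0 → β = 0) :
    ∃ (V : Type) (_ : AddCommGroup V) (_ : Module ℂ V),
      FiniteDimensional ℂ V ∧ Nontrivial V ∧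
      ∃ Xp Xm J : ℕ → Module.End ℂ V,
        (∀ s t, J s * J t = J t * J s) ∧
        (∀ s t, J s * Xp t - Xp t * J s = (2 : ℂ) • Xp (s + t)) ∧
        (∀ s t, J s * Xm t - Xm t * J s = -((2 : ℂ) • Xm (s + t))) ∧
        (∀ s t, Xp t * Xm s - Xm s * Xp t = J (s + t) - Q • J (s + t + 1)) ∧
        (∀ s t, Xp t * Xp s = Xp s * Xp t) ∧
        (∀ s t, Xm t * Xm s = Xm s * Xm t) ∧
        (∀ W : Submodule ℂ V,
          (∀ t, ∀ x ∈ W, Xp t x ∈ W) → (∀ t, ∀ x ∈ W, Xm t x ∈ W) →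
            (∀ t, ∀ x ∈ W, J t x ∈ W) → W = ⊥ ∨ W = ⊤) ∧
        ∃ v : V, v ≠ 0 ∧ (∀ t, Xp t v = 0) ∧
          J 0 v = ((n : ℂ) + β) • v ∧
          (∀ t, 0 < t →
            (Q = 0 → J t v = (∑ k, γ k ^ t) • v) ∧
            (Q ≠ 0 → J t v = ((∑ k, γ k ^ t) + Q ^ (-(t : ℤ)) * β) • v)) := by
  classical
  let ι := univ.image γ
  let m : ι → ℕ := fun b => #{k | γ k = b}
  let z : ℕ → ℂ := fun t => Q ^ (-(t : ℤ)) * β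
  have hz (t : ℕ) : z t = Q * z (t + 1) := zpow_neg_mul_eq_mul_zpow_neg_succ_mul hβ t
  have hQa (b : ι) : Q * b ≠ 1 := by
    obtain ⟨k, -, hk⟩ := mem_image.mp b.2
    exact hk ▸ hγ k
  have hweight (t : ℕ) : ∑ b : ι, (m b : ℂ) * (b : ℂ) ^ t = ∑ k, γ k ^ t :=
    sum_image_card_fiber_mul γ (· ^ t)
  refine ⟨Box m → ℂ, inferInstance, inferInstance, inferInstance, inferInstance,
    xPlus m Subtype.val, xMinus m Q Subtype.val, jCurrent m Subtype.val z,
    jCurrent_commute _ z, jCurrent_mul_xPlus_sub _ z, jCurrent_mul_xMinus_sub Q _ z,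
    xPlus_mul_xMinus_sub Q _ z hz, xPlus_commute _, xMinus_commute Q _,
    fun W hp hm _ => eq_bot_or_eq_top_of_current_invariant Subtype.val_injective hQa W hp hm,
    Pi.single 0 1, Pi.single_ne_zero_iff.2 one_ne_zero, xPlus_single_zero _, ?_,
    fun t _ => ⟨fun hQ => ?_, fun _ => ?_⟩⟩ <;> rw [jCurrent_single_zero, hweight]
  · simp [z]
  · simp [z, hβ hQ]
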